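/- arXiv:2605.30097 — 7 statements merged into one kernel-verified Lean document; each statement's English description precedes it below -/
import Mathlib

section
/- In a two-sided skew brace (B, +, ∘), for each a ∈ B the map σ_a : B → B defined by σ_a(b) = b ∘ a - a is an automorphism of the additive group (B, +). -/
/-- A skew (left) brace: two group structures on the same set satisfying
`a ∘ (b + c) = a ∘ b - a + a ∘ c`. -/
structure SkewBrace (B : Type*) where
  add : B → B → B
  zero : B
  neg : B → B
  mul : B → B → B
  one : B
  inv : B → B
  add_assoc : ∀ a b c, add (add a b) c = add a (add b c)
  zero_add : ∀ a, add zero a = a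
  add_zero : ∀ a, add a zero = a
  neg_add : ∀ a, add (neg a) a = zero
  add_neg : ∀ a, add a (neg a) = zero
  mul_assoc : ∀ a b c, mul (mul a b) c = mul a (mul b c)
  one_mul : ∀ a, mul one a = a
  mul_one : ∀ a, mul a one = a
  inv_mul : ∀ a, mul (inv a) a = one
  mul_inv : ∀ a, mul a (inv a) = one
  brace : ∀ a b c, mul a (add b c) = add (add (mul a b) (neg a)) (mul a c)

namespace SkewBrace

variable {B : Type*} (S : SkewBrace B)

/-- `λ_a(b) = -a + a ∘ b`. -/
def lam (a b : B) : B := S.add (S.neg a) (S.mul a b)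

/-- `σ_a(b) = b ∘ a - a`. -/
def sigma (a b : B) : B := S.add (S.mul b a) (S.neg a)

/-- A skew brace is two-sided if `(a + b) ∘ c = a ∘ c - c + b ∘ c`. -/
def TwoSided : Prop :=
  ∀ a b c, S.mul (S.add a b) c = S.add (S.add (S.mul a c) (S.neg c)) (S.mul b c)

/-- An ideal: additively normal, multiplicatively normal, λ-invariant subgroup. -/
def IsIdeal (I : Set B) : Prop :=
  S.zero ∈ I ∧
  (∀ x ∈ I, ∀ y ∈ I, S.add x y ∈ I) ∧
  (∀ x ∈ I, S.neg x ∈ I) ∧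
  (∀ b : B, ∀ x ∈ I, S.add (S.add b x) (S.neg b) ∈ I) ∧
  (∀ x ∈ I, ∀ y ∈ I, S.mul x y ∈ I) ∧
  (∀ x ∈ I, S.inv x ∈ I) ∧
  (∀ b : B, ∀ x ∈ I, S.mul (S.mul b x) (S.inv b) ∈ I) ∧
  (∀ b : B, ∀ x ∈ I, S.lam b x ∈ I)

/-- The set `C(B,I)` of elements additively and multiplicatively commuting with `I`
and acting trivially on it. -/
def centraSet (I : Set B) : Set B :=
  { b | ∀ x ∈ I, S.add b x = S.add x b ∧ S.mul b x = S.mul x b ∧ S.mul b x = S.add b x }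

end SkewBrace

/-- In a two-sided skew brace, `σ_a(b) = b ∘ a - a` is an automorphism of `(B,+)`. -/
theorem twoSided_sigma_addAut {B : Type*} (S : SkewBrace B) (h : S.TwoSided) (a : B) :
    Function.Bijective (S.sigma a) ∧
      ∀ b c : B, S.sigma a (S.add b c) = S.add (S.sigma a b) (S.sigma a c) := by
  constructor
  · refine Function.bijective_iff_has_inverse.mpr ⟨fun b => S.mul (S.add b a) (S.inv a), ?_, ?_⟩
    · intro b
      simp only [SkewBrace.sigma]
      rw [S.add_assoc, S.neg_add, S.add_zero, S.mul_assoc, S.mul_inv, S.mul_one]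
    · intro b
      simp only [SkewBrace.sigma]
      rw [S.mul_assoc, S.inv_mul, S.mul_one, S.add_assoc, S.add_neg, S.add_zero]
  · intro b c
    simp only [SkewBrace.sigma]
    rw [h b c a]
    simp only [S.add_assoc]
end

section
/- In a two-sided skew brace (B, +, ∘), the map σ : (B, ∘) → Aut(B, +) sending a to σ_a, where σ_a(b) = b ∘ a - a, is a group anti-homomorphism, i.e. σ_{a ∘ b} = σ_b ∘ σ_a for all a, b ∈ B. -/
/-- In a two-sided skew brace, `σ` is a group anti-homomorphism: `σ_{a∘b} = σ_b ∘ σ_a`. -/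
theorem twoSided_sigma_antihom {B : Type*} (S : SkewBrace B) (h : S.TwoSided) (a b : B) :
    ∀ c : B, S.sigma (S.mul a b) c = S.sigma b (S.sigma a c) := by
  have cancel : ∀ x y z : B, S.add x y = S.add x z → y = z := by
    intro x y z hxy
    have := congrArg (S.add (S.neg x)) hxy
    rwa [← S.add_assoc, ← S.add_assoc, S.neg_add, S.zero_add, S.zero_add] at this
  have zero_mul : ∀ x : B, S.mul S.zero x = x := by
    intro x
    have hz := h S.zero S.zero x
    rw [S.zero_add, S.add_assoc] at hz
    have h0 : S.add (S.mul S.zero x) S.zero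
        = S.add (S.mul S.zero x) (S.add (S.neg x) (S.mul S.zero x)) := by
      rw [S.add_zero]; exact hz
    have h1 := cancel _ _ _ h0
    have := congrArg (S.add x) h1
    rw [S.add_zero, ← S.add_assoc, S.add_neg, S.zero_add] at this
    exact this.symm
  have neg_mul : ∀ x : B, S.mul (S.neg x) b
      = S.add (S.neg (S.add (S.mul x b) (S.neg b))) b := by
    intro x
    have hx := h x (S.neg x) b
    rw [S.add_neg, zero_mul] at hx
    have := congrArg (S.add (S.neg (S.add (S.mul x b) (S.neg b)))) hx.symm
    rwa [← S.add_assoc, S.neg_add, S.zero_add] at this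
  have neg_add_rev : ∀ x y : B, S.neg (S.add x y) = S.add (S.neg y) (S.neg x) := by
    intro x y
    apply cancel (S.add x y)
    rw [S.add_neg, ← S.add_assoc, S.add_assoc x y, S.add_neg, S.add_zero, S.add_neg]
  have neg_neg : ∀ x : B, S.neg (S.neg x) = x := by
    intro x
    apply cancel (S.neg x)
    rw [S.add_neg, S.neg_add]
  have nacl : ∀ x y : B, S.add (S.neg x) (S.add x y) = y := by
    intro x y; rw [← S.add_assoc, S.neg_add, S.zero_add]
  have ancl : ∀ x y : B, S.add x (S.add (S.neg x) y) = y := by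
    intro x y; rw [← S.add_assoc, S.add_neg, S.zero_add]
  intro c
  simp only [SkewBrace.sigma]
  rw [h, neg_mul, neg_add_rev]
  simp only [S.add_assoc, S.mul_assoc, nacl, ancl, S.add_neg, S.neg_add, S.add_zero,
    S.zero_add, neg_neg]
end

section
/- Let (B, +, ∘) be a two-sided skew brace and I an ideal of B. Define C(B,I) = { b ∈ B : b + x = x + b, b ∘ x = x ∘ b, and b ∘ x = b + x for all x ∈ I }. Then C(B,I) is closed under additive subtraction: for all a, b ∈ C(B,I), a - b ∈ C(B,I). -/
/-- In a two-sided skew brace, `C(B,I)` is closed under additive subtraction. -/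
theorem twoSided_centra_sub_closed {B : Type*} (S : SkewBrace B) (h : S.TwoSided)
    (I : Set B) (hI : S.IsIdeal I) (a b : B)
    (ha : a ∈ S.centraSet I) (hb : b ∈ S.centraSet I) :
    S.add a (S.neg b) ∈ S.centraSet I := by
  -- basic group facts for `add`
  have addrc : ∀ u v w : B, S.add u w = S.add v w → u = v := by
    intro u v w hw
    have := congrArg (fun t => S.add t (S.neg w)) hw
    simpa [S.add_assoc, S.add_neg, S.add_zero] using this
  have cancel1 : ∀ u w : B, S.add u (S.add (S.neg u) w) = w := by
    intro u w; rw [← S.add_assoc, S.add_neg, S.zero_add]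
  have cancel2 : ∀ u w : B, S.add (S.neg u) (S.add u w) = w := by
    intro u w; rw [← S.add_assoc, S.neg_add, S.zero_add]
  -- `a ∘ 0 = a`
  have mul_zero : ∀ u : B, S.mul u S.zero = u := by
    intro u
    have hb0 := S.brace u S.zero S.zero
    rw [S.zero_add] at hb0
    have h1 : S.add S.zero (S.mul u S.zero) =
        S.add (S.add (S.mul u S.zero) (S.neg u)) (S.mul u S.zero) := by
      rw [S.zero_add]; exact hb0
    have h2 : S.zero = S.add (S.mul u S.zero) (S.neg u) := addrc _ _ _ h1
    have h3 := congrArg (fun t => S.add t u) h2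
    simpa [S.zero_add, S.add_assoc, S.neg_add, S.add_zero] using h3.symm
  have zero_eq_one : S.zero = S.one := by
    have h0 := mul_zero S.one
    rw [S.one_mul] at h0
    exact h0
  have zero_mul : ∀ u : B, S.mul S.zero u = u := by
    intro u; rw [zero_eq_one]; exact S.one_mul u
  intro x hx
  obtain ⟨ha1, ha2, ha3⟩ := ha x hx
  obtain ⟨hb1, hb2, hb3⟩ := hb x hx
  -- `-b + x = x + -b`
  have hnb1 : S.add (S.neg b) x = S.add x (S.neg b) := by
    apply addrc _ _ b
    rw [S.add_assoc, ← hb1, S.add_assoc]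
    simp only [cancel2, S.neg_add, S.add_zero]
  -- `(-b) ∘ x = -b + x`
  have hnbmul : S.mul (S.neg b) x = S.add (S.neg b) x := by
    have h2 := h (S.neg b) b x
    rw [S.neg_add, zero_mul, hb3, hb1] at h2
    simp only [S.add_assoc, cancel2] at h2
    have h4 := congrArg (fun t => S.add t (S.neg b)) h2
    simp only [S.add_assoc, S.add_neg, S.add_zero] at h4
    rw [← hnb1] at h4
    exact h4.symm
  -- `x ∘ (-b) = -b + x`
  have hxnb : S.mul x (S.neg b) = S.add (S.neg b) x := by
    have h2 := S.brace x b (S.neg b)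
    rw [S.add_neg, mul_zero, ← hb2, hb3] at h2
    simp only [S.add_assoc, cancel1] at h2
    have h4 := congrArg (fun t => S.add (S.neg b) t) h2
    simp only [cancel2] at h4
    exact h4.symm
  -- `(a - b) ∘ x = (a - b) + x`
  have key : S.mul (S.add a (S.neg b)) x = S.add (S.add a (S.neg b)) x := by
    rw [h a (S.neg b) x, ha3, hnbmul]
    simp only [S.add_assoc, cancel1]
  refine ⟨?_, ?_, key⟩
  · calc S.add (S.add a (S.neg b)) x = S.add a (S.add (S.neg b) x) := S.add_assoc ..
      _ = S.add a (S.add x (S.neg b)) := by rw [hnb1]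
      _ = S.add (S.add a x) (S.neg b) := (S.add_assoc ..).symm
      _ = S.add (S.add x a) (S.neg b) := by rw [ha1]
      _ = S.add x (S.add a (S.neg b)) := S.add_assoc ..
  · rw [key, S.brace x a (S.neg b), ← ha2, ha3, hxnb]
    simp only [S.add_assoc, cancel1]
end

section
/- Let (B, +, ∘) be a two-sided skew brace and I an ideal of B. Define C(B,I) = { b ∈ B : b + x = x + b, b ∘ x = x ∘ b, and b ∘ x = b + x for all x ∈ I }. Then C(B,I) is closed under the multiplicative operation ∘ and under multiplicative inverses. -/
namespace SkewBrace

variable {B : Type*} (S : SkewBrace B)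

lemma add_neg_cancel_left (a b : B) : S.add a (S.add (S.neg a) b) = b := by
  rw [← S.add_assoc, S.add_neg, S.zero_add]

lemma neg_add_cancel_left (a b : B) : S.add (S.neg a) (S.add a b) = b := by
  rw [← S.add_assoc, S.neg_add, S.zero_add]

lemma mul_inv_cancel_left (a b : B) : S.mul a (S.mul (S.inv a) b) = b := by
  rw [← S.mul_assoc, S.mul_inv, S.one_mul]

lemma inv_mul_cancel_left (a b : B) : S.mul (S.inv a) (S.mul a b) = b := by
  rw [← S.mul_assoc, S.inv_mul, S.one_mul]

lemma add_left_cancel' {a b c : B} (h : S.add a b = S.add a c) : b = c := by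
  have := congrArg (S.add (S.neg a)) h
  rwa [S.neg_add_cancel_left, S.neg_add_cancel_left] at this

lemma eq_neg_of_add_eq_zero' {a b : B} (h : S.add a b = S.zero) : b = S.neg a := by
  apply S.add_left_cancel' (a := a)
  rw [h, S.add_neg]

lemma neg_neg' (a : B) : S.neg (S.neg a) = a :=
  (S.eq_neg_of_add_eq_zero' (S.neg_add a)).symm

lemma neg_zero' : S.neg S.zero = S.zero :=
  (S.eq_neg_of_add_eq_zero' (S.zero_add S.zero)).symm

lemma neg_add_rev' (a b : B) : S.neg (S.add a b) = S.add (S.neg b) (S.neg a) := by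
  symm
  apply S.eq_neg_of_add_eq_zero'
  rw [S.add_assoc, S.add_neg_cancel_left, S.add_neg]

lemma mul_zero' (a : B) : S.mul a S.zero = a := by
  have h := S.brace a S.zero S.zero
  rw [S.zero_add, S.add_assoc] at h
  have h0 : S.add (S.mul a S.zero) S.zero =
      S.add (S.mul a S.zero) (S.add (S.neg a) (S.mul a S.zero)) := by
    rw [S.add_zero]; exact h
  have h1 : S.zero = S.add (S.neg a) (S.mul a S.zero) := S.add_left_cancel' h0
  have h2 := congrArg (S.add a) h1
  rw [S.add_zero, S.add_neg_cancel_left] at h2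
  exact h2.symm

lemma one_eq_zero' : S.one = S.zero := by
  have h1 := S.mul_zero' S.one
  rw [S.one_mul] at h1
  exact h1.symm

lemma mul_neg' (a b : B) :
    S.mul a (S.neg b) = S.add (S.add a (S.neg (S.mul a b))) a := by
  have h := S.brace a b (S.neg b)
  rw [S.add_neg, S.mul_zero'] at h
  -- h : a = (a∘b - a) + a∘(-b)
  have h2 := congrArg (S.add (S.neg (S.add (S.mul a b) (S.neg a)))) h
  rw [S.neg_add_cancel_left, S.neg_add_rev', S.neg_neg'] at h2
  rw [← h2, S.add_assoc]

lemma lam_mul' (a b x : B) : S.lam (S.mul a b) x = S.lam a (S.lam b x) := by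
  unfold lam
  rw [S.brace, S.mul_neg', ← S.mul_assoc]
  simp only [S.add_assoc, S.neg_add_cancel_left, S.add_neg_cancel_left]

end SkewBrace

/-- In a two-sided skew brace, `C(B,I)` is closed under `∘` and under `∘`-inverses. -/
theorem twoSided_centra_mul_closed {B : Type*} (S : SkewBrace B) (h : S.TwoSided)
    (I : Set B) (hI : S.IsIdeal I) :
    (∀ a ∈ S.centraSet I, ∀ b ∈ S.centraSet I, S.mul a b ∈ S.centraSet I) ∧
      (∀ a ∈ S.centraSet I, S.inv a ∈ S.centraSet I) := by
  constructor
  · intro a ha b hb x hx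
    obtain ⟨ha1, ha2, ha3⟩ := ha x hx
    obtain ⟨hb1, hb2, hb3⟩ := hb x hx
    have hmul : S.mul (S.mul a b) x = S.mul x (S.mul a b) := by
      rw [S.mul_assoc, hb2, ← S.mul_assoc, ha2, S.mul_assoc]
    have hadd : S.mul (S.mul a b) x = S.add (S.mul a b) x := by
      rw [S.mul_assoc, hb3, S.brace, ha3, S.add_assoc, S.neg_add_cancel_left]
    have hcomm : S.add (S.mul a b) x = S.add x (S.mul a b) := by
      have hxb : S.mul x b = S.add x b := by rw [← hb2, hb3, hb1]
      have e1 : S.mul (S.add x a) b = S.add x (S.mul a b) := by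
        rw [h, hxb, S.add_assoc, S.add_assoc, S.add_neg_cancel_left]
      have e2 : S.mul (S.add a x) b = S.add (S.mul a b) x := by
        rw [h, hxb, S.add_assoc, ← hb1, S.neg_add_cancel_left]
      rw [← e1, ← ha1, e2]
    exact ⟨hcomm, hmul, hadd⟩
  · intro a ha x hx
    obtain ⟨ha1, ha2, ha3⟩ := ha x hx
    have hmul : S.mul (S.inv a) x = S.mul x (S.inv a) := by
      have : S.mul a (S.mul x (S.inv a)) = x := by
        rw [← S.mul_assoc, ha2, S.mul_assoc, S.mul_inv, S.mul_one]
      calc S.mul (S.inv a) x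
          = S.mul (S.inv a) (S.mul a (S.mul x (S.inv a))) := by rw [this]
        _ = S.mul x (S.inv a) := S.inv_mul_cancel_left _ _
    have hadd : S.mul (S.inv a) x = S.add (S.inv a) x := by
      have hlx : S.lam a x = x := by
        unfold SkewBrace.lam
        rw [ha3, S.neg_add_cancel_left]
      have h1 : S.lam (S.mul (S.inv a) a) x = S.lam (S.inv a) x := by
        rw [S.lam_mul', hlx]
      rw [S.inv_mul] at h1
      unfold SkewBrace.lam at h1
      rw [S.one_eq_zero', S.neg_zero', S.zero_add] at h1
      have h1' : S.mul S.zero x = x := by rw [← S.one_eq_zero', S.one_mul]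
      rw [h1'] at h1
      -- h1 : x = -a⁻¹ + a⁻¹∘x
      have h2 := congrArg (S.add (S.inv a)) h1.symm
      rwa [S.add_neg_cancel_left] at h2
    have hxa' : S.mul x (S.inv a) = S.add x (S.inv a) := by
      have hxa : S.mul x a = S.add x a := by rw [← ha2, ha3, ha1]
      have e1 : S.mul (S.add x (S.inv a)) a = x := by
        rw [h, S.inv_mul, S.one_eq_zero', S.add_zero, hxa, S.add_assoc,
          S.add_neg, S.add_zero]
      have e2 := congrArg (fun t => S.mul t (S.inv a)) e1
      rw [S.mul_assoc, S.mul_inv, S.mul_one] at e2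
      exact e2.symm
    have hcomm : S.add (S.inv a) x = S.add x (S.inv a) := by
      rw [← hadd, hmul, hxa']
    exact ⟨hcomm, hmul, hadd⟩
end

section
/- Let (B, +, ∘) be a two-sided skew brace and I an ideal of B. Define C(B,I) = { b ∈ B : b + x = x + b, b ∘ x = x ∘ b, and b ∘ x = b + x for all x ∈ I }. Then C(B,I) is λ-invariant: for all h ∈ B and a ∈ C(B,I), λ_h(a) ∈ C(B,I), where λ_h(a) = -h + h ∘ a. -/
namespace SkewBraceAux

open SkewBrace

variable {B : Type*} (S : SkewBrace B)

lemma add_left_cancel' (a b c : B) (hbc : S.add a b = S.add a c) : b = c := by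
  have : S.add (S.neg a) (S.add a b) = S.add (S.neg a) (S.add a c) := by rw [hbc]
  rwa [← S.add_assoc, ← S.add_assoc, S.neg_add, S.zero_add, S.zero_add] at this

lemma eq_neg_of (a b : B) (hab : S.add a b = S.zero) : b = S.neg a := by
  apply add_left_cancel' S a
  rw [hab, S.add_neg]

lemma neg_neg' (a : B) : S.neg (S.neg a) = a :=
  (eq_neg_of S (S.neg a) a (S.neg_add a)).symm

lemma neg_zero' : S.neg S.zero = S.zero :=
  (eq_neg_of S S.zero S.zero (S.zero_add S.zero)).symm

lemma neg_add_rev' (a b : B) : S.neg (S.add a b) = S.add (S.neg b) (S.neg a) := by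
  refine (eq_neg_of S _ _ ?_).symm
  rw [S.add_assoc, ← S.add_assoc b, S.add_neg, S.zero_add, S.add_neg]

lemma mul_zero' (a : B) : S.mul a S.zero = a := by
  have hb := S.brace a S.zero S.zero
  rw [S.zero_add] at hb
  have : S.add (S.mul a S.zero) S.zero
      = S.add (S.mul a S.zero) (S.add (S.neg a) (S.mul a S.zero)) := by
    rw [S.add_zero, ← S.add_assoc, ← hb]
  have h0 : S.zero = S.add (S.neg a) (S.mul a S.zero) := add_left_cancel' S _ _ _ this
  have := congrArg (S.add a) h0
  rw [S.add_zero, ← S.add_assoc, S.add_neg, S.zero_add] at this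
  exact this.symm

lemma one_eq_zero : S.one = S.zero := by
  have h1 := mul_zero' S S.one
  rw [S.one_mul] at h1
  exact h1.symm

lemma zero_mul' (a : B) : S.mul S.zero a = a := by
  rw [← one_eq_zero, S.one_mul]

lemma inv_inv' (a : B) : S.inv (S.inv a) = a := by
  have : S.mul a (S.mul (S.inv a) (S.inv (S.inv a))) = S.mul a S.one := by
    rw [S.mul_inv, S.mul_one]
  rw [← S.mul_assoc, S.mul_inv, S.one_mul, S.mul_one] at this
  exact this

lemma lam_add (g x y : B) :
    S.lam g (S.add x y) = S.add (S.lam g x) (S.lam g y) := by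
  unfold SkewBrace.lam
  rw [S.brace, S.add_assoc, S.add_assoc]

lemma lam_zero (g : B) : S.lam g S.zero = S.zero := by
  unfold SkewBrace.lam
  rw [mul_zero' S, S.neg_add]

lemma lam_neg (g x : B) : S.lam g (S.neg x) = S.neg (S.lam g x) := by
  apply eq_neg_of
  rw [← lam_add, S.add_neg, lam_zero]

lemma lam_id (x : B) : S.lam S.zero x = x := by
  unfold SkewBrace.lam
  rw [zero_mul' S, neg_zero' S, S.zero_add]

lemma lam_comp (g k x : B) : S.lam g (S.lam k x) = S.lam (S.mul g k) x := by
  unfold SkewBrace.lam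
  rw [S.brace]
  have hgk : S.mul g (S.neg k) = S.add (S.add g (S.neg (S.mul g k))) g := by
    have := lam_neg S g k
    unfold SkewBrace.lam at this
    have := congrArg (S.add g) this
    rw [← S.add_assoc, S.add_neg, S.zero_add, neg_add_rev' S, neg_neg' S] at this
    rw [this, S.add_assoc]
  rw [hgk, ← S.mul_assoc]
  -- goal : -g + (((g + -(g∘k)) + g) + -g + (g∘k)∘x) = -(g∘k) + (g∘k)∘x
  rw [S.add_assoc (S.add g (S.neg (S.mul g k))) g, S.add_assoc (S.add g (S.neg (S.mul g k)))]
  rw [S.add_neg, S.zero_add]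
  rw [S.add_assoc g, ← S.add_assoc (S.neg g), S.neg_add, S.zero_add]

lemma mul_eq_add_lam (a b : B) : S.mul a b = S.add a (S.lam a b) := by
  unfold SkewBrace.lam
  rw [← S.add_assoc, S.add_neg, S.zero_add]

lemma neg_mul (h : S.TwoSided) (a x : B) :
    S.mul (S.neg a) x = S.add (S.add x (S.neg (S.mul a x))) x := by
  have h1 := h a (S.neg a) x
  rw [S.add_neg, zero_mul' S] at h1
  -- x = (a∘x + -x) + (-a)∘x
  have := congrArg (S.add (S.neg (S.add (S.mul a x) (S.neg x)))) h1
  rw [← S.add_assoc, S.neg_add, S.zero_add, neg_add_rev' S, neg_neg' S] at this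
  exact this.symm

end SkewBraceAux

open SkewBraceAux

/-- In a two-sided skew brace, `C(B,I)` is λ-invariant. -/
theorem twoSided_centra_lam_invariant {B : Type*} (S : SkewBrace B) (h : S.TwoSided)
    (I : Set B) (hI : S.IsIdeal I) :
    ∀ h' : B, ∀ a ∈ S.centraSet I, S.lam h' a ∈ S.centraSet I := by
  intro h' a ha
  obtain ⟨-, -, -, hconjAdd, -, -, hconjMul, hlamInv⟩ := hI
  -- Step A: for y ∈ I, λ_y(a) = a
  have stepA : ∀ y ∈ I, S.lam y a = a := by
    intro y hy
    obtain ⟨hadd, hmul, hma⟩ := ha y hy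
    unfold SkewBrace.lam
    rw [← hmul, hma, hadd, ← S.add_assoc, S.neg_add, S.zero_add]
  -- additive commutation
  have goal1 : ∀ x ∈ I, S.add (S.lam h' a) x = S.add x (S.lam h' a) := by
    intro x hx
    have hy : S.lam (S.inv h') x ∈ I := hlamInv (S.inv h') x hx
    have hlam : S.lam h' (S.lam (S.inv h') x) = x := by
      rw [lam_comp, S.mul_inv, one_eq_zero, lam_id]
    calc S.add (S.lam h' a) x
        = S.add (S.lam h' a) (S.lam h' (S.lam (S.inv h') x)) := by rw [hlam]
      _ = S.lam h' (S.add a (S.lam (S.inv h') x)) := (lam_add S h' _ _).symm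
      _ = S.lam h' (S.add (S.lam (S.inv h') x) a) := by
          rw [(ha _ hy).1]
      _ = S.add (S.lam h' (S.lam (S.inv h') x)) (S.lam h' a) := lam_add S h' _ _
      _ = S.add x (S.lam h' a) := by rw [hlam]
  -- key identity : (λ_{h'} a) ∘ x = x + λ_{h'} a  for x ∈ I
  have key : ∀ x ∈ I, S.mul (S.lam h' a) x = S.add x (S.lam h' a) := by
    intro x hx
    obtain ⟨hadd, hmul, hma⟩ := ha x hx
    have h1 : S.mul (S.lam h' a) x
        = S.add (S.add (S.mul (S.neg h') x) (S.neg x)) (S.mul (S.mul h' a) x) := by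
      unfold SkewBrace.lam
      rw [h (S.neg h') (S.mul h' a) x]
    rw [h1, neg_mul S h h' x, S.mul_assoc, hmul, ← S.mul_assoc]
    -- ((x + -(h'∘x)) + x + -x) + (h'∘x)∘a = x + λ_{h'} a
    rw [S.add_assoc (S.add x (S.neg (S.mul h' x))) x, S.add_neg, S.add_zero]
    rw [S.add_assoc]
    have : S.add (S.neg (S.mul h' x)) (S.mul (S.mul h' x) a) = S.lam (S.mul h' x) a := rfl
    rw [this, ← lam_comp, stepA x hx]
  refine fun x hx => ⟨goal1 x hx, ?_, ?_⟩
  · -- multiplicative commutation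
    have hz : S.mul (S.mul (S.inv h') x) h' ∈ I := by
      have := hconjMul (S.inv h') x hx
      rwa [inv_inv' S] at this
    have hxh : S.mul x h' = S.mul h' (S.mul (S.mul (S.inv h') x) h') := by
      rw [← S.mul_assoc, ← S.mul_assoc, S.mul_inv, S.one_mul]
    calc S.mul (S.lam h' a) x
        = S.add x (S.lam h' a) := key x hx
      _ = S.add x (S.lam (S.mul x h') a) := by
          rw [hxh, ← lam_comp, stepA _ hz]
      _ = S.add x (S.lam x (S.lam h' a)) := by rw [lam_comp]
      _ = S.mul x (S.lam h' a) := (mul_eq_add_lam S x (S.lam h' a)).symm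
  · rw [key x hx, goal1 x hx]
end

section
/- Let B and H be skew braces and σ : (B, ∘) → Aut(H) a group homomorphism into the skew brace automorphisms of H. Then B × H equipped with componentwise addition (a,u) + (b,v) = (a+b, u+v) and multiplication (a,u) ∘ (b,v) = (a ∘ σ_u(b), u ∘ v) is a skew brace. -/
namespace SkewBrace
variable {B : Type*} (S : SkewBrace B)

theorem idem_eq_one {x : B} (h : S.mul x x = x) : x = S.one := by
  have := congrArg (S.mul (S.inv x)) h
  rw [← S.mul_assoc, S.inv_mul, S.one_mul] at this
  exact this

theorem eq_inv_of_mul_eq_one {x y : B} (h : S.mul x y = S.one) : y = S.inv x := by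
  have := congrArg (S.mul (S.inv x)) h
  rw [← S.mul_assoc, S.inv_mul, S.one_mul, S.mul_one] at this
  exact this

end SkewBrace

/-- Semidirect product of skew braces: given skew braces `B`, `H` and a group
homomorphism `σ` from `(H,∘)` into the skew brace automorphisms of `B`, the set
`B × H` with componentwise addition and `(a,u) ∘ (b,v) = (a ∘ σ_u(b), u ∘ v)`
is a skew brace. -/
theorem skewBrace_semidirect {B H : Type*} (SB : SkewBrace B) (SH : SkewBrace H)
    (σ : H → B → B)
    (hbij : ∀ u : H, Function.Bijective (σ u))
    (haddpres : ∀ u : H, ∀ a b : B, σ u (SB.add a b) = SB.add (σ u a) (σ u b))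
    (hmulpres : ∀ u : H, ∀ a b : B, σ u (SB.mul a b) = SB.mul (σ u a) (σ u b))
    (hhom : ∀ u v : H, ∀ a : B, σ (SH.mul u v) a = σ u (σ v a))
    (hone : ∀ a : B, σ SH.one a = a) :
    ∃ S : SkewBrace (B × H),
      (∀ p q : B × H, S.add p q = (SB.add p.1 q.1, SH.add p.2 q.2)) ∧
      (∀ p q : B × H, S.mul p q = (SB.mul p.1 (σ p.2 q.1), SH.mul p.2 q.2)) := by

  have hσone : ∀ u : H, σ u SB.one = SB.one := by
    intro u
    apply SB.idem_eq_one
    rw [← hmulpres, SB.one_mul]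
  have hσinv : ∀ u : H, ∀ a : B, σ u (SB.inv a) = SB.inv (σ u a) := by
    intro u a
    apply SB.eq_inv_of_mul_eq_one
    rw [← hmulpres, SB.mul_inv, hσone]
  refine ⟨{
    add := fun p q => (SB.add p.1 q.1, SH.add p.2 q.2)
    zero := (SB.zero, SH.zero)
    neg := fun p => (SB.neg p.1, SH.neg p.2)
    mul := fun p q => (SB.mul p.1 (σ p.2 q.1), SH.mul p.2 q.2)
    one := (SB.one, SH.one)
    inv := fun p => (SB.inv (σ (SH.inv p.2) p.1), SH.inv p.2)
    add_assoc := fun a b c => by simp [SB.add_assoc, SH.add_assoc]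
    zero_add := fun a => by simp [SB.zero_add, SH.zero_add]
    add_zero := fun a => by simp [SB.add_zero, SH.add_zero]
    neg_add := fun a => by simp [SB.neg_add, SH.neg_add]
    add_neg := fun a => by simp [SB.add_neg, SH.add_neg]
    mul_assoc := fun a b c => by
      simp only [Prod.mk.injEq]
      constructor
      · rw [SB.mul_assoc, hhom, hmulpres]
      · rw [SH.mul_assoc]
    one_mul := fun a => by simp [SB.one_mul, SH.one_mul, hone]
    mul_one := fun a => by simp [SB.mul_one, SH.mul_one, hσone]
    inv_mul := fun a => by
      simp only [Prod.mk.injEq]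
      exact ⟨SB.inv_mul _, SH.inv_mul _⟩
    mul_inv := fun a => by
      simp only [Prod.mk.injEq]
      refine ⟨?_, SH.mul_inv _⟩
      rw [hσinv, ← hhom, SH.mul_inv, hone, SB.mul_inv]
    brace := fun a b c => by
      simp only [Prod.mk.injEq]
      rw [haddpres, SB.brace, SH.brace]
      exact ⟨rfl, rfl⟩
  }, fun p q => rfl, fun p q => rfl⟩
end

section
/- There exists a 4-dimensional pre-Lie algebra A over the rationals with basis e₁, e₂, e₃, e₄ and non-trivial products e₁e₂ = e₂, e₁e₃ = e₃, e₁e₄ = e₄, e₁e₁ = 2e₁, e₂e₂ = e₃e₃ = e₄e₄ = e₁ (all other basis products zero), in which (e₂e₂)e₃ = e₃ ≠ 0 while (e₃e₂)e₂ = (e₂e₃)e₂ = e₂(e₃e₂) = e₂(e₂e₃) = 0; consequently, there are no scalars μ₁,...,μ₈ such that the identity (yz)x = μ₁(xy)z + μ₂(yx)z + μ₃z(xy) + μ₄z(yx) + μ₅(xz)y + μ₆(zx)y + μ₇y(xz) + μ₈y(zx) holds in A. -/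
def myMul : (Fin 4 → ℚ) →ₗ[ℚ] (Fin 4 → ℚ) →ₗ[ℚ] (Fin 4 → ℚ) :=
  LinearMap.mk₂ ℚ
    (fun x y j => if j = 0 then 2 * x 0 * y 0 + x 1 * y 1 + x 2 * y 2 + x 3 * y 3
      else x 0 * y j)
    (fun x x' y => by funext j; simp only [Pi.add_apply]; split <;> ring)
    (fun c x y => by funext j; simp only [Pi.smul_apply, smul_eq_mul]; split <;> ring)
    (fun x y y' => by funext j; simp only [Pi.add_apply]; split <;> ring)
    (fun c x y => by funext j; simp only [Pi.smul_apply, smul_eq_mul]; split <;> ring)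

@[simp] lemma myMul_apply (x y : Fin 4 → ℚ) (j : Fin 4) :
    myMul x y j = if j = 0 then 2 * x 0 * y 0 + x 1 * y 1 + x 2 * y 2 + x 3 * y 3
      else x 0 * y j := rfl

@[simp] lemma finEq01 : ((0:Fin 4) = 1) = False := eq_false (by decide)
@[simp] lemma finEq02 : ((0:Fin 4) = 2) = False := eq_false (by decide)
@[simp] lemma finEq03 : ((0:Fin 4) = 3) = False := eq_false (by decide)
@[simp] lemma finEq10 : ((1:Fin 4) = 0) = False := eq_false (by decide)
@[simp] lemma finEq12 : ((1:Fin 4) = 2) = False := eq_false (by decide)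
@[simp] lemma finEq13 : ((1:Fin 4) = 3) = False := eq_false (by decide)
@[simp] lemma finEq20 : ((2:Fin 4) = 0) = False := eq_false (by decide)
@[simp] lemma finEq21 : ((2:Fin 4) = 1) = False := eq_false (by decide)
@[simp] lemma finEq23 : ((2:Fin 4) = 3) = False := eq_false (by decide)
@[simp] lemma finEq30 : ((3:Fin 4) = 0) = False := eq_false (by decide)
@[simp] lemma finEq31 : ((3:Fin 4) = 1) = False := eq_false (by decide)
@[simp] lemma finEq32 : ((3:Fin 4) = 2) = False := eq_false (by decide)

set_option maxHeartbeats 1000000 in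
/-- There is a 4-dimensional pre-Lie algebra over `ℚ` (Burde's `I₄`) in which the
identity `(yz)x = Σ μᵢ (permuted products)` fails for every choice of scalars. -/
theorem preLie_I4_no_mu :
    ∃ mul : (Fin 4 → ℚ) →ₗ[ℚ] (Fin 4 → ℚ) →ₗ[ℚ] (Fin 4 → ℚ),
      (∀ x y z, mul x (mul y z) - mul (mul x y) z = mul y (mul x z) - mul (mul y x) z) ∧
      (let e : Fin 4 → (Fin 4 → ℚ) := fun i => Pi.single i 1
       mul (e 0) (e 1) = e 1 ∧ mul (e 0) (e 2) = e 2 ∧ mul (e 0) (e 3) = e 3 ∧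
       mul (e 0) (e 0) = (2 : ℚ) • e 0 ∧
       mul (e 1) (e 1) = e 0 ∧ mul (e 2) (e 2) = e 0 ∧ mul (e 3) (e 3) = e 0 ∧
       (∀ i j : Fin 4, ¬(i = 0 ∨ i = j) → mul (e i) (e j) = 0) ∧
       mul (mul (e 1) (e 1)) (e 2) = e 2 ∧ (e 2 : Fin 4 → ℚ) ≠ 0 ∧
       mul (mul (e 2) (e 1)) (e 1) = 0 ∧ mul (mul (e 1) (e 2)) (e 1) = 0 ∧
       mul (e 1) (mul (e 2) (e 1)) = 0 ∧ mul (e 1) (mul (e 1) (e 2)) = 0) ∧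
      ¬ ∃ μ : Fin 8 → ℚ, ∀ x y z,
        mul (mul y z) x =
          μ 0 • mul (mul x y) z + μ 1 • mul (mul y x) z +
          μ 2 • mul z (mul x y) + μ 3 • mul z (mul y x) +
          μ 4 • mul (mul x z) y + μ 5 • mul (mul z x) y +
          μ 6 • mul y (mul x z) + μ 7 • mul y (mul z x) := by
  refine ⟨myMul, fun x y z => ?_, ⟨?_, ?_, ?_, ?_, ?_, ?_, ?_, ?_, ?_, ?_, ?_, ?_, ?_, ?_⟩, ?_⟩
  · funext j
    simp only [Pi.sub_apply, myMul_apply, Fin.reduceEq, reduceIte]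
    split <;> ring
  all_goals try
    (funext j; fin_cases j <;> simp [myMul_apply, Pi.single_apply])
  · intro i j h
    funext k
    fin_cases i <;> fin_cases j <;> fin_cases k <;>
      simp_all [myMul_apply, Pi.single_apply]
  · intro hcon
    have h2 := congrFun hcon 2
    simp [Pi.single_apply] at h2
  · rintro ⟨μ, h⟩
    have h2 := congrFun (h (Pi.single 2 1) (Pi.single 1 1) (Pi.single 1 1)) 2
    simp [Pi.single_apply] at h2
end
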